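/- arXiv:0908.0447 — 5 statements merged into one kernel-verified Lean document; each statement's English description precedes it below -/
import Mathlib

section
/- Let 0 < a < b < 1/2 and 0 < δ < 1. Then there exists a real signed measure ρ supported on a finite subset of the interval (a,b) such that ∫ dρ = 1, |∫ s^k dρ(s)| < δ for all integers k ≥ 1, and the total variation ∫|dρ| is at most δ^{-c}, where c > 0 is a constant depending only on a and b. -/
/-!
Take the Lagrange extrapolation to `0` from `n + 1` equally spaced nodes in `(a, b)`: the measure
`ρ = ∑ₓ wₓ δₓ` with `∫ p dρ = p 0` for `deg p ≤ n`, so that its mass is `1` and its moments of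
orders `1, …, n` vanish. Removing a node `x` from the node set `S` gives the recursion
`M_{k+1}(S) = x (M_k(S) - M_k(S \ {x}))` for the moments, whence `|M_k| ≤ (2b)^k` for every `k`,
which is `< δ` for `k > n` as soon as `(2b)^(n+1) < δ`. The weights are explicit products; with
spacing `h = (b - a)/(n + 1)` their absolute values sum to at most
`(2b/h)^n / n! ≤ (2eb/(b - a))^n`, and for the least such `n` this is `δ^(-c)` with
`c = log (2eb/(b - a)) / log (1/(2b))`.
-/

open Finset Polynomial Nat

section Field

variable {K : Type*} [Field K] [DecidableEq K] {S : Finset K} {x y : K}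

def extrapolationWeight (S : Finset K) (x : K) : K :=
  ∏ y ∈ S.erase x, y / (y - x)

def extrapolationMoment (S : Finset K) (k : ℕ) : K :=
  ∑ x ∈ S, extrapolationWeight S x * x ^ k

theorem extrapolationWeight_eq_eval_basis (S : Finset K) (x : K) :
    extrapolationWeight S x = (Lagrange.basis S id x).eval 0 := by
  rw [Lagrange.basis, eval_prod]
  refine prod_congr rfl fun y _ => ?_
  simp only [Lagrange.basisDivisor, eval_mul, eval_C, eval_sub, eval_X, id, zero_sub]
  rw [← neg_sub x y, div_neg, inv_mul_eq_div, neg_div]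

theorem sum_extrapolationWeight_mul_eval {p : K[X]} (hp : p.degree < #S) :
    ∑ x ∈ S, extrapolationWeight S x * p.eval x = p.eval 0 := by
  conv_rhs => rw [Lagrange.eq_interpolate (v := id) (Set.injOn_id _) hp]
  simp [Lagrange.interpolate_apply, eval_finsetSum, extrapolationWeight_eq_eval_basis, mul_comm]

theorem extrapolationMoment_zero (hS : S.Nonempty) : extrapolationMoment S 0 = 1 := by
  simpa [extrapolationMoment] using
    sum_extrapolationWeight_mul_eval (S := S) (p := 1) (by simpa using hS.card_pos)

theorem extrapolationMoment_eq_zero {k : ℕ} (hk : k ≠ 0) (hkS : k < #S) :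
    extrapolationMoment S k = 0 := by
  simpa [extrapolationMoment, hk] using
    sum_extrapolationWeight_mul_eval (S := S) (p := X ^ k) (by simpa using hkS)

theorem extrapolationWeight_eq_div_mul_erase (hx : x ∈ S) (hyx : y ≠ x) :
    extrapolationWeight S y = x / (x - y) * extrapolationWeight (S.erase x) y := by
  rw [extrapolationWeight, extrapolationWeight, erase_right_comm,
    mul_prod_erase _ (fun z => z / (z - y)) (mem_erase.2 ⟨hyx.symm, hx⟩)]

theorem extrapolationMoment_succ (hx : x ∈ S) (k : ℕ) :
    extrapolationMoment S (k + 1) =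
      x * (extrapolationMoment S k - extrapolationMoment (S.erase x) k) := by
  -- the factor `y - x` kills the term at `x`, and cancels the factor `x / (x - y)` of the others
  have hterm : ∀ y ∈ S.erase x, extrapolationWeight S y * y ^ (k + 1) =
      x * (extrapolationWeight S y * y ^ k) - x * (extrapolationWeight (S.erase x) y * y ^ k) := by
    intro y hy
    have hyx := ne_of_mem_erase hy
    rw [extrapolationWeight_eq_div_mul_erase hx hyx]
    field_simp [sub_ne_zero.2 hyx.symm]
    ring
  simp only [extrapolationMoment]
  rw [← add_sum_erase S _ hx, ← add_sum_erase S _ hx, sum_congr rfl hterm, sum_sub_distrib,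
    ← mul_sum, ← mul_sum]
  ring

end Field

section NormedField

variable {K : Type*} [NormedField K] [DecidableEq K] {S : Finset K} {b : ℝ}

theorem norm_extrapolationMoment_le (hb : 0 ≤ b) (hS : ∀ x ∈ S, ‖x‖ ≤ b) (k : ℕ) :
    ‖extrapolationMoment S k‖ ≤ (2 * b) ^ k := by
  induction k generalizing S with
  | zero =>
    rcases S.eq_empty_or_nonempty with rfl | hne
    · simp [extrapolationMoment]
    · simp [extrapolationMoment_zero hne]
  | succ k ih =>
    rcases S.eq_empty_or_nonempty with rfl | ⟨x, hx⟩
    · simp only [extrapolationMoment, sum_empty, norm_zero]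
      positivity
    · rw [extrapolationMoment_succ hx, norm_mul]
      calc ‖x‖ * ‖extrapolationMoment S k - extrapolationMoment (S.erase x) k‖
          ≤ b * ((2 * b) ^ k + (2 * b) ^ k) :=
            mul_le_mul (hS x hx) (norm_sub_le_of_le (ih hS)
              (ih fun y hy => hS y (mem_of_mem_erase hy))) (norm_nonneg _) hb
        _ = (2 * b) ^ (k + 1) := by ring

theorem norm_extrapolationMoment_le_pow_card (hb : 0 ≤ b) (hb1 : 2 * b ≤ 1)
    (hS : ∀ x ∈ S, ‖x‖ ≤ b) {k : ℕ} (hk : k ≠ 0) :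
    ‖extrapolationMoment S k‖ ≤ (2 * b) ^ #S := by
  rcases lt_or_ge k #S with hkS | hkS
  · rw [extrapolationMoment_eq_zero hk hkS, norm_zero]
    positivity
  · exact (norm_extrapolationMoment_le hb hS k).trans
      (pow_le_pow_of_le_one (by positivity) hb1 hkS)

end NormedField

theorem prod_erase_abs_natCast_sub {i n : ℕ} (hi : i ≤ n) :
    ∏ j ∈ (range (n + 1)).erase i, |(j : ℝ) - i| = i ! * (n - i)! := by
  induction n, hi using Nat.le_induction with
  | base =>
    rw [range_add_one, erase_insert notMem_range_self, Nat.sub_self, Nat.factorial_zero,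
      Nat.cast_one, mul_one, ← Nat.descFactorial_self, Nat.descFactorial_eq_prod_range,
      Nat.cast_prod]
    refine prod_congr rfl fun j hj => ?_
    rw [abs_sub_comm, Nat.cast_sub (mem_range.1 hj).le, abs_of_nonneg]
    simpa using (mem_range.1 hj).le
  | succ n hin ih =>
    rw [range_add_one, erase_insert_of_ne (by omega), prod_insert (by simp), ih,
      Nat.succ_sub hin, Nat.factorial_succ,
      abs_of_nonneg (by rw [sub_nonneg]; exact_mod_cast hin.trans n.le_succ)]
    push_cast [Nat.cast_sub hin]
    ring

theorem sum_inv_factorial_mul_factorial (n : ℕ) :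
    ∑ i ∈ range (n + 1), ((i ! * (n - i)! : ℕ) : ℝ)⁻¹ = 2 ^ n / n ! := by
  have hchoose : ∀ i ∈ range (n + 1), ((i ! * (n - i)! : ℕ) : ℝ)⁻¹ = n.choose i / n ! := by
    intro i hi
    rw [Nat.cast_choose ℝ (Nat.lt_succ_iff.1 (mem_range.1 hi)), div_div_cancel_left']
    · push_cast; rfl
    · positivity
  rw [sum_congr rfl hchoose, ← sum_div, ← Nat.cast_sum, Nat.sum_range_choose]
  push_cast
  rfl

theorem add_one_pow_le_exp_mul_factorial (n : ℕ) : ((n : ℝ) + 1) ^ n ≤ Real.exp n * n ! := by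
  induction n with
  | zero => simp
  | succ n ih =>
    have hstep : ((n : ℝ) + 1 + 1) ^ (n + 1) ≤ Real.exp 1 * ((n : ℝ) + 1) ^ (n + 1) := by
      have := Real.one_add_inv_pow_le_exp (n := n + 1)
      calc ((n : ℝ) + 1 + 1) ^ (n + 1)
          = (1 + ((n : ℝ) + 1)⁻¹) ^ (n + 1) * ((n : ℝ) + 1) ^ (n + 1) := by
            rw [← mul_pow]; congr 1; field_simp
        _ ≤ _ := by push_cast at this; gcongr
    calc (((n + 1 : ℕ) : ℝ) + 1) ^ (n + 1) ≤ Real.exp 1 * ((n : ℝ) + 1) ^ (n + 1) := by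
          push_cast; exact hstep
      _ = Real.exp 1 * ((n : ℝ) + 1) * ((n : ℝ) + 1) ^ n := by ring
      _ ≤ Real.exp 1 * ((n : ℝ) + 1) * (Real.exp n * n !) := by gcongr
      _ = Real.exp (n + 1 : ℕ) * (n + 1)! := by
        push_cast [Nat.factorial_succ, Real.exp_add]; ring

noncomputable def equallySpaced (c h : ℝ) (n : ℕ) : Finset ℝ :=
  (range (n + 1)).image fun i : ℕ => c + i * h

theorem card_equallySpaced {c h : ℝ} (hh : h ≠ 0) (n : ℕ) : #(equallySpaced c h n) = n + 1 := by
  rw [equallySpaced, Finset.card_image_of_injective _ fun j k hjk => by simpa [hh] using hjk,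
    card_range]

theorem abs_extrapolationWeight_equallySpaced_le {c h b : ℝ} (hh : 0 < h) {n i : ℕ} (hi : i ≤ n)
    (hb : ∀ x ∈ equallySpaced c h n, |x| ≤ b) :
    |extrapolationWeight (equallySpaced c h n) (c + i * h)| ≤
      (b / h) ^ n * ((i ! * (n - i)! : ℕ) : ℝ)⁻¹ := by
  set v : ℕ → ℝ := fun i => c + i * h
  have hv : Function.Injective v := fun j k hjk => by simpa [v, hh.ne'] using hjk
  have hcard : #((range (n + 1)).erase i) = n := by
    simp [card_erase_of_mem, Nat.lt_succ_of_le hi]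
  have hfactor : ∀ j ∈ (range (n + 1)).erase i,
      |v j / (v j - v i)| ≤ b / (|(j : ℝ) - i| * h) := by
    intro j hj
    rw [show v j - v i = (j - i) * h by simp only [v]; ring, abs_div, abs_mul, abs_of_pos hh]
    exact div_le_div_of_nonneg_right (hb _ (mem_image_of_mem v (mem_of_mem_erase hj)))
      (by positivity)
  calc |extrapolationWeight (equallySpaced c h n) (v i)|
      = ∏ j ∈ (range (n + 1)).erase i, |v j / (v j - v i)| := by
        rw [extrapolationWeight, equallySpaced, ← image_erase hv, prod_image hv.injOn, abs_prod]
    _ ≤ ∏ j ∈ (range (n + 1)).erase i, b / (|(j : ℝ) - i| * h) :=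
        prod_le_prod (fun _ _ => abs_nonneg _) hfactor
    _ = _ := by
        rw [prod_div_distrib, prod_mul_distrib, prod_const, prod_const, hcard,
          prod_erase_abs_natCast_sub hi]
        push_cast
        ring

theorem sum_abs_extrapolationWeight_equallySpaced_le {c h b : ℝ} (hh : 0 < h) {n : ℕ}
    (hb : ∀ x ∈ equallySpaced c h n, |x| ≤ b) :
    ∑ x ∈ equallySpaced c h n, |extrapolationWeight (equallySpaced c h n) x| ≤
      (2 * b / h) ^ n / n ! := by
  have hv : Function.Injective fun i : ℕ => c + i * h := fun j k hjk => by
    simpa [hh.ne'] using hjk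
  calc ∑ x ∈ equallySpaced c h n, |extrapolationWeight (equallySpaced c h n) x|
      = ∑ i ∈ range (n + 1), |extrapolationWeight (equallySpaced c h n) (c + i * h)| := by
        rw [equallySpaced, sum_image hv.injOn]
    _ ≤ ∑ i ∈ range (n + 1), (b / h) ^ n * ((i ! * (n - i)! : ℕ) : ℝ)⁻¹ :=
        sum_le_sum fun i hi =>
          abs_extrapolationWeight_equallySpaced_le hh (Nat.lt_succ_iff.1 (mem_range.1 hi)) hb
    _ = (2 * b / h) ^ n / n ! := by
        rw [← mul_sum, sum_inv_factorial_mul_factorial]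
        ring

noncomputable def midpointNodes (a b : ℝ) (n : ℕ) : Finset ℝ :=
  equallySpaced (a + (b - a) / (n + 1) / 2) ((b - a) / (n + 1)) n

theorem midpointNodes_subset_Ioo {a b : ℝ} (hab : a < b) (n : ℕ) :
    ↑(midpointNodes a b n) ⊆ Set.Ioo a b := by
  intro x hx
  obtain ⟨i, hi, rfl⟩ := mem_image.1 hx
  have hi' : (i : ℝ) + 1 ≤ n + 1 := by exact_mod_cast mem_range.1 hi
  have hba : 0 < b - a := sub_pos.2 hab
  constructor
  · have : 0 < (b - a) / (n + 1) := by positivity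
    nlinarith [(i.cast_nonneg : (0 : ℝ) ≤ i)]
  · rw [← sub_pos]
    field_simp
    nlinarith

theorem abs_le_of_mem_midpointNodes {a b x : ℝ} (ha : 0 ≤ a) (hab : a < b) {n : ℕ}
    (hx : x ∈ midpointNodes a b n) : |x| ≤ b := by
  obtain ⟨hax, hxb⟩ := midpointNodes_subset_Ioo hab n hx
  exact abs_le.2 ⟨by linarith, hxb.le⟩

theorem sum_abs_extrapolationWeight_midpointNodes_le {a b : ℝ} (ha : 0 ≤ a) (hab : a < b)
    (n : ℕ) :
    ∑ x ∈ midpointNodes a b n, |extrapolationWeight (midpointNodes a b n) x| ≤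
      (2 * Real.exp 1 * b / (b - a)) ^ n := by
  have hba : 0 < b - a := sub_pos.2 hab
  calc _ ≤ (2 * b / ((b - a) / (n + 1))) ^ n / n ! :=
        sum_abs_extrapolationWeight_equallySpaced_le (by positivity) fun _ =>
          abs_le_of_mem_midpointNodes ha hab
    _ = (2 * b / (b - a)) ^ n * (((n : ℝ) + 1) ^ n / n !) := by
        rw [div_div_eq_mul_div, mul_div_right_comm, mul_pow, mul_div_assoc]
    _ ≤ (2 * b / (b - a)) ^ n * Real.exp n := by
        gcongr
        · exact pow_nonneg (div_nonneg (by linarith) hba.le) n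
        · rw [div_le_iff₀ (by positivity)]
          exact add_one_pow_le_exp_mul_factorial n
    _ = _ := by rw [← Real.exp_one_pow, ← mul_pow]; ring

theorem pow_le_rpow_of_le_pow {q B δ : ℝ} (hq0 : 0 < q) (hq1 : q < 1) (hB : 1 ≤ B) (hδ : 0 < δ)
    {n : ℕ} (hδn : δ ≤ q ^ n) : B ^ n ≤ δ ^ (-(Real.log B / Real.log q⁻¹)) := by
  have hlogq : Real.log q⁻¹ ≠ 0 := (Real.log_pos (one_lt_inv₀ hq0 |>.2 hq1)).ne'
  have hqB : q⁻¹ ^ (Real.log B / Real.log q⁻¹) = B := by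
    rw [Real.rpow_def_of_pos (inv_pos.2 hq0), mul_div_cancel₀ _ hlogq,
      Real.exp_log (zero_lt_one.trans_le hB)]
  calc B ^ n = (q ^ n) ^ (-(Real.log B / Real.log q⁻¹)) := by
        rw [Real.rpow_neg (by positivity), ← Real.inv_rpow (by positivity), ← inv_pow,
          ← Real.rpow_pow_comm (by positivity), hqB]
    _ ≤ δ ^ (-(Real.log B / Real.log q⁻¹)) :=
        Real.rpow_le_rpow_of_nonpos hδ hδn <| neg_nonpos.2 <|
          div_nonneg (Real.log_nonneg hB) (Real.log_nonneg (one_le_inv₀ hq0 |>.2 hq1.le))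

/-- Quantitative Kahane lemma: a finitely supported real signed measure on `(a,b)`
(encoded by a finite set `F ⊆ (a,b)` and weights `w`) with total mass `1`,
all positive-order moments less than `δ`, and total variation at most `δ^{-c}`,
where `c > 0` depends only on `a` and `b`. -/
theorem stmt2 (a b : ℝ) (ha : 0 < a) (hab : a < b) (hb : b < 1 / 2) :
    ∃ c : ℝ, 0 < c ∧ ∀ δ : ℝ, 0 < δ → δ < 1 →
      ∃ (F : Finset ℝ) (w : ℝ → ℝ),
        (↑F : Set ℝ) ⊆ Set.Ioo a b ∧
        (∑ s ∈ F, w s) = 1 ∧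
        (∀ k : ℕ, 1 ≤ k → |∑ s ∈ F, w s * s ^ k| < δ) ∧
        (∑ s ∈ F, |w s|) ≤ δ ^ (-c) := by
  set B := 2 * Real.exp 1 * b / (b - a)
  have hb0 : 0 < b := ha.trans hab
  have hq0 : 0 < 2 * b := by linarith
  have hq1 : 2 * b < 1 := by linarith
  have hB : 1 < B := by
    rw [one_lt_div (by linarith)]
    nlinarith [Real.add_one_le_exp 1]
  refine ⟨Real.log B / Real.log (2 * b)⁻¹,
    div_pos (Real.log_pos hB) (Real.log_pos (one_lt_inv₀ hq0 |>.2 hq1)), fun δ hδ hδ1 => ?_⟩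
  obtain ⟨n, hn, hδn⟩ := exists_nat_pow_near_of_lt_one hδ hδ1.le hq0 hq1
  have hcard : #(midpointNodes a b n) = n + 1 :=
    card_equallySpaced (div_pos (sub_pos.2 hab) n.cast_add_one_pos).ne' n
  refine ⟨midpointNodes a b n, extrapolationWeight (midpointNodes a b n),
    midpointNodes_subset_Ioo hab n, ?_, fun k hk => ?_, ?_⟩
  · simpa [extrapolationMoment] using
      extrapolationMoment_zero (S := midpointNodes a b n) (card_pos.1 (by omega))
  · have hmoment := norm_extrapolationMoment_le_pow_card (S := midpointNodes a b n) hb0.le hq1.le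
      (fun _ => abs_le_of_mem_midpointNodes ha.le hab) (by omega : k ≠ 0)
    rw [hcard] at hmoment
    exact hmoment.trans_lt hn
  · exact (sum_abs_extrapolationWeight_midpointNodes_le ha.le hab n).trans
      (pow_le_rpow_of_le_pow hq0 hq1 hB.le hδ hδn)
end

section
/- Let X_1, ..., X_N be random variables on a probability space with −1 ≤ X_j ≤ 1, all having the same expectation E(X_j) = μ > 0, and suppose there is 0 < ε < 1 such that for every non-empty subset A of {1,...,N}, (1−ε)·μ^{|A|} ≤ E(∏_{j∈A} X_j) ≤ (1+ε)·μ^{|A|}. Let X = (1/N)∑_{j=1}^N X_j. Then for any α > 0, P(X < μ − α) ≤ exp(−α²N/8) + ε·exp(N/4). -/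
/-!
Chernoff's method. For `0 ≤ t ≤ 1` and `|x| ≤ 1` one has `exp (-t x) ≤ 1 + t² - t x`, so
`E exp (-t ∑ X_j)` is at most `E ∏ (1 + t² - t X_j)`. Expanding the product over subsets `A`,
every moment `E ∏_{j ∈ A} X_j` is `μ^|A|` up to a relative error `ε`; the main terms resum to
`(1 + t² - t μ)^N` and the errors to at most `ε (1 + t² + t μ)^N`. Markov's inequality with
`t = α / 5` then gives the two exponentials.
-/

open MeasureTheory ProbabilityTheory Finset Real

theorem Finset.prod_add_mul_eq_sum_powerset {ι R : Type*} [CommSemiring R] [DecidableEq ι]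
    (s : Finset ι) (a b : R) (x : ι → R) :
    ∏ i ∈ s, (a + b * x i) = ∑ A ∈ s.powerset, a ^ (#s - #A) * b ^ #A * ∏ i ∈ A, x i := by
  simp_rw [add_comm a, prod_add]
  refine sum_congr rfl fun A hA => ?_
  rw [prod_mul_distrib, prod_const, prod_const, card_sdiff_of_subset (mem_powerset.mp hA)]
  ring

lemma Real.exp_mul_le_one_add_sq_add_mul {t x : ℝ} (ht : |t| ≤ 1) (hx : |x| ≤ 1) :
    exp (t * x) ≤ 1 + t ^ 2 + t * x := by
  have htx : |t * x| ≤ 1 := by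
    rw [abs_mul]
    exact mul_le_one₀ ht (abs_nonneg x) hx
  have hsq : (t * x) ^ 2 ≤ t ^ 2 := by
    rw [mul_pow]
    exact mul_le_of_le_one_right (sq_nonneg t) (sq_le_one_iff_abs_le_one x |>.mpr hx)
  linarith [(abs_le.mp (abs_exp_sub_one_sub_id_le htx)).2]

lemma Real.exp_mul_sum_le_prod {ι : Type*} {s : Finset ι} {x : ι → ℝ} {t : ℝ} (ht : |t| ≤ 1)
    (hx : ∀ i ∈ s, |x i| ≤ 1) :
    exp (t * ∑ i ∈ s, x i) ≤ ∏ i ∈ s, (1 + t ^ 2 + t * x i) := by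
  rw [mul_sum, exp_sum]
  exact prod_le_prod (fun i _ => (exp_pos _).le) fun i hi =>
    exp_mul_le_one_add_sq_add_mul ht (hx i hi)

lemma neg_one_le_one_div_card_mul_sum {ι : Type*} {s : Finset ι} {x : ι → ℝ}
    (hx : ∀ i ∈ s, -1 ≤ x i) : -1 ≤ (1 / #s : ℝ) * ∑ i ∈ s, x i := by
  have hsum : -(#s : ℝ) ≤ ∑ i ∈ s, x i := by simpa using sum_le_sum hx
  calc (-1 : ℝ) ≤ -(#s / #s) := neg_le_neg (div_self_le_one _)
    _ = 1 / #s * -#s := by ring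
    _ ≤ 1 / #s * ∑ i ∈ s, x i := by gcongr

lemma Real.one_add_pow_le_exp {x : ℝ} (hx : -1 ≤ x) (n : ℕ) : (1 + x) ^ n ≤ exp (n * x) := by
  rw [exp_nat_mul]
  exact pow_le_pow_left₀ (by linarith) (by linarith [add_one_le_exp x]) n

section AlmostMultiplicative

variable {Ω ι : Type*} [MeasurableSpace Ω] {P : Measure Ω} {X : ι → Ω → ℝ} {s : Finset ι}

def AlmostMultiplicative (P : Measure Ω) (X : ι → Ω → ℝ) (s : Finset ι) (m ε : ℝ) : Prop :=
  ∀ A ⊆ s, |∫ ω, ∏ i ∈ A, X i ω ∂P - m ^ #A| ≤ ε * m ^ #A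

lemma integrable_prod_of_abs_le_one [IsFiniteMeasure P] (hmeas : ∀ i, Measurable (X i))
    (hbdd : ∀ i ω, |X i ω| ≤ 1) (A : Finset ι) : Integrable (fun ω => ∏ i ∈ A, X i ω) P :=
  .of_bound (A.measurable_prod fun i _ => hmeas i).aestronglyMeasurable 1 <| ae_of_all _ fun ω => by
    rw [Real.norm_eq_abs, abs_prod]
    exact prod_le_one (fun i _ => abs_nonneg _) fun i _ => hbdd i ω

lemma almostMultiplicative_of_le_of_le [IsProbabilityMeasure P] {m ε : ℝ} (hε : 0 ≤ ε)
    (h : ∀ A ⊆ s, A.Nonempty → (1 - ε) * m ^ #A ≤ ∫ ω, ∏ i ∈ A, X i ω ∂P ∧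
      ∫ ω, ∏ i ∈ A, X i ω ∂P ≤ (1 + ε) * m ^ #A) :
    AlmostMultiplicative P X s m ε := fun A hA => by
  rcases A.eq_empty_or_nonempty with rfl | hne
  · simpa using hε
  · obtain ⟨hlow, hupp⟩ := h A hA hne
    exact abs_le.mpr ⟨by linarith, by linarith⟩

variable [DecidableEq ι]

lemma integrable_prod_add_mul (hint : ∀ A ⊆ s, Integrable (fun ω => ∏ i ∈ A, X i ω) P)
    (a b : ℝ) : Integrable (fun ω => ∏ i ∈ s, (a + b * X i ω)) P := by
  simp_rw [prod_add_mul_eq_sum_powerset]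
  exact integrable_finsetSum _ fun A hA => (hint A (mem_powerset.mp hA)).const_mul _

lemma integral_prod_add_mul (hint : ∀ A ⊆ s, Integrable (fun ω => ∏ i ∈ A, X i ω) P)
    (a b : ℝ) : ∫ ω, ∏ i ∈ s, (a + b * X i ω) ∂P
      = ∑ A ∈ s.powerset, a ^ (#s - #A) * b ^ #A * ∫ ω, ∏ i ∈ A, X i ω ∂P := by
  simp_rw [prod_add_mul_eq_sum_powerset]
  rw [integral_finsetSum _ fun A hA => (hint A (mem_powerset.mp hA)).const_mul _]
  simp_rw [integral_const_mul]

lemma AlmostMultiplicative.abs_integral_prod_add_mul_sub_pow_le {m ε : ℝ}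
    (hX : AlmostMultiplicative P X s m ε)
    (hint : ∀ A ⊆ s, Integrable (fun ω => ∏ i ∈ A, X i ω) P) (a b : ℝ) :
    |∫ ω, ∏ i ∈ s, (a + b * X i ω) ∂P - (a + b * m) ^ #s| ≤ ε * (|a| + |b| * m) ^ #s := by
  have binomial (c d : ℝ) :
      (c + d * m) ^ #s = ∑ A ∈ s.powerset, c ^ (#s - #A) * d ^ #A * m ^ #A := by
    simpa using prod_add_mul_eq_sum_powerset s c d fun _ => m
  calc |∫ ω, ∏ i ∈ s, (a + b * X i ω) ∂P - (a + b * m) ^ #s|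
      = |∑ A ∈ s.powerset, a ^ (#s - #A) * b ^ #A * (∫ ω, ∏ i ∈ A, X i ω ∂P - m ^ #A)| := by
        simp_rw [integral_prod_add_mul hint, binomial, ← sum_sub_distrib, mul_sub]
    _ ≤ ∑ A ∈ s.powerset, |a| ^ (#s - #A) * |b| ^ #A * (ε * m ^ #A) := by
        refine (abs_sum_le_sum_abs _ _).trans (sum_le_sum fun A hA => ?_)
        rw [abs_mul, abs_mul, abs_pow, abs_pow]
        exact mul_le_mul_of_nonneg_left (hX A (mem_powerset.mp hA)) (by positivity)
    _ = ε * (|a| + |b| * m) ^ #s := by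
        rw [binomial, mul_sum]
        exact sum_congr rfl fun A _ => by ring

variable [IsFiniteMeasure P]

lemma AlmostMultiplicative.mgf_sum_le {m ε t : ℝ} (hX : AlmostMultiplicative P X s m ε)
    (hmeas : ∀ i, Measurable (X i)) (hbdd : ∀ i ω, |X i ω| ≤ 1) (hε : 0 ≤ ε) (hm : |m| ≤ 1)
    (ht : |t| ≤ 1) :
    mgf (fun ω => ∑ i ∈ s, X i ω) P t
      ≤ exp (#s * (t ^ 2 + t * m)) + ε * exp (#s * (t ^ 2 + |t| * m)) := by
  have hint A (_ : A ⊆ s) := integrable_prod_of_abs_le_one (P := P) hmeas hbdd A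
  have hmoments := (abs_le.mp (hX.abs_integral_prod_add_mul_sub_pow_le hint (1 + t ^ 2) t)).2
  rw [abs_of_pos (by positivity : (0 : ℝ) < 1 + t ^ 2)] at hmoments
  have htm : |t * m| ≤ 1 := by
    rw [abs_mul]
    exact mul_le_one₀ ht (abs_nonneg m) hm
  calc mgf (fun ω => ∑ i ∈ s, X i ω) P t = ∫ ω, exp (t * ∑ i ∈ s, X i ω) ∂P := rfl
    _ ≤ ∫ ω, ∏ i ∈ s, (1 + t ^ 2 + t * X i ω) ∂P :=
        integral_mono_of_nonneg (ae_of_all _ fun ω => (exp_pos _).le)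
          (integrable_prod_add_mul hint _ _)
          (ae_of_all _ fun ω => exp_mul_sum_le_prod ht fun i _ => hbdd i ω)
    _ ≤ (1 + (t ^ 2 + t * m)) ^ #s + ε * (1 + (t ^ 2 + |t| * m)) ^ #s := by
        simp only [← add_assoc]
        linarith
    _ ≤ exp (#s * (t ^ 2 + t * m)) + ε * exp (#s * (t ^ 2 + |t| * m)) := by
        have htm' : |(|t| * m)| ≤ 1 := by rwa [abs_mul, abs_abs, ← abs_mul]
        gcongr
        · exact one_add_pow_le_exp (by nlinarith [abs_le.mp htm]) _
        · exact one_add_pow_le_exp (by nlinarith [abs_le.mp htm']) _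

lemma AlmostMultiplicative.measureReal_sum_le_le {m ε t : ℝ}
    (hX : AlmostMultiplicative P X s m ε) (hmeas : ∀ i, Measurable (X i))
    (hbdd : ∀ i ω, |X i ω| ≤ 1) (hε : 0 ≤ ε) (hm : |m| ≤ 1) (ht₀ : 0 ≤ t) (ht₁ : t ≤ 1)
    (c : ℝ) :
    P.real {ω | ∑ i ∈ s, X i ω ≤ c}
      ≤ exp (t * c) * (exp (#s * (t ^ 2 - t * m)) + ε * exp (#s * (t ^ 2 + t * m))) := by
  have ht : |-t| ≤ 1 := by rwa [abs_neg, abs_of_nonneg ht₀]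
  have hint : Integrable (fun ω => exp (-t * ∑ i ∈ s, X i ω)) P :=
    (integrable_prod_add_mul (fun A _ => integrable_prod_of_abs_le_one hmeas hbdd A) _ _).mono'
      (measurable_const.mul (s.measurable_sum fun i _ => hmeas i)).exp.aestronglyMeasurable
      (ae_of_all _ fun ω => by
        rw [Real.norm_eq_abs, abs_of_pos (exp_pos _)]
        exact exp_mul_sum_le_prod ht fun i _ => hbdd i ω)
  calc P.real {ω | ∑ i ∈ s, X i ω ≤ c}
      ≤ exp (- -t * c) * mgf (fun ω => ∑ i ∈ s, X i ω) P (-t) :=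
        measure_le_le_exp_mul_mgf c (by linarith) hint
    _ ≤ exp (t * c) * (exp (#s * (t ^ 2 - t * m)) + ε * exp (#s * (t ^ 2 + t * m))) := by
        rw [neg_neg]
        gcongr
        simpa [abs_of_nonneg ht₀, sub_eq_add_neg] using hX.mgf_sum_le hmeas hbdd hε hm ht

end AlmostMultiplicative

lemma exp_chernoff_bound_div_five_le {n m α ε : ℝ} (hn : 0 ≤ n) (hm : |m| ≤ 1) (hε : 0 ≤ ε) :
    exp (α / 5 * (n * (m - α))) *
        (exp (n * ((α / 5) ^ 2 - α / 5 * m)) + ε * exp (n * ((α / 5) ^ 2 + α / 5 * m)))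
      ≤ exp (-(α ^ 2) * n / 8) + ε * exp (n / 4) := by
  have hm' := sq_le_one_iff_abs_le_one m |>.mpr hm
  have hsmall : n * (-4 * α ^ 2 / 25) ≤ -(α ^ 2) * n / 8 := by nlinarith [sq_nonneg α]
  -- `1/4 - (2αm/5 - 4α²/25) = (1 - m²)/4 + (m/2 - 2α/5)²`
  have hlarge : n * (2 * α * m / 5 - 4 * α ^ 2 / 25) ≤ n / 4 := by
    nlinarith [sq_nonneg (m / 2 - 2 * α / 5)]
  calc exp (α / 5 * (n * (m - α))) *
        (exp (n * ((α / 5) ^ 2 - α / 5 * m)) + ε * exp (n * ((α / 5) ^ 2 + α / 5 * m)))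
      = exp (n * (-4 * α ^ 2 / 25)) + ε * exp (n * (2 * α * m / 5 - 4 * α ^ 2 / 25)) := by
        rw [mul_add, ← exp_add, mul_left_comm _ ε, ← exp_add]
        ring_nf
    _ ≤ exp (-(α ^ 2) * n / 8) + ε * exp (n / 4) := by gcongr

theorem stmt5_general {Ω : Type*} [MeasureSpace Ω] [IsProbabilityMeasure (volume : Measure Ω)]
    (N : ℕ) (hN : 0 < N) (X : Fin N → Ω → ℝ) (hmeas : ∀ j, Measurable (X j))
    (hbdd : ∀ j ω, -1 ≤ X j ω ∧ X j ω ≤ 1)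
    (μ : ℝ) (hexp : ∀ j, (∫ ω, X j ω) = μ)
    (ε : ℝ) (hε : 0 < ε)
    (hmult : ∀ A : Finset (Fin N), A.Nonempty →
      (1 - ε) * μ ^ A.card ≤ (∫ ω, ∏ j ∈ A, X j ω) ∧
      (∫ ω, ∏ j ∈ A, X j ω) ≤ (1 + ε) * μ ^ A.card)
    (α : ℝ) (hα : 0 < α) :
    (volume {ω | (1 / N : ℝ) * ∑ j, X j ω < μ - α}).toReal
      ≤ Real.exp (-(α ^ 2) * N / 8) + ε * Real.exp (N / 4) := by
  have hbdd' j ω : |X j ω| ≤ 1 := abs_le.mpr (hbdd j ω)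
  have hμ : |μ| ≤ 1 := by
    simpa [hexp] using norm_integral_le_of_norm_le_const (μ := volume) (f := X ⟨0, hN⟩) (C := 1)
      (ae_of_all _ (hbdd' _))
  have hX : AlmostMultiplicative volume X univ μ ε :=
    almostMultiplicative_of_le_of_le hε.le fun A _ => hmult A
  have hN' : (0 : ℝ) < N := Nat.cast_pos.mpr hN
  rcases lt_or_ge α 2 with hα₂ | hα₂
  · have hsub : {ω | (1 / N : ℝ) * ∑ j, X j ω < μ - α} ⊆ {ω | ∑ j, X j ω ≤ N * (μ - α)} :=
      Set.ofPred_subset_ofPred.mpr fun ω hω => by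
        rw [one_div_mul_eq_div, div_lt_iff₀ hN'] at hω
        linarith
    calc (volume {ω | (1 / N : ℝ) * ∑ j, X j ω < μ - α}).toReal
        ≤ volume.real {ω | ∑ j, X j ω ≤ N * (μ - α)} := measureReal_mono hsub
      _ ≤ exp (α / 5 * (N * (μ - α))) * (exp (N * ((α / 5) ^ 2 - α / 5 * μ))
            + ε * exp (N * ((α / 5) ^ 2 + α / 5 * μ))) := by
          simpa using hX.measureReal_sum_le_le hmeas (fun j _ => hbdd' j _) hε.le hμ
            (by positivity) (by linarith) (N * (μ - α))
      _ ≤ exp (-(α ^ 2) * N / 8) + ε * exp (N / 4) :=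
          exp_chernoff_bound_div_five_le hN'.le hμ hε.le
  · have hempty : {ω | (1 / N : ℝ) * ∑ j, X j ω < μ - α} = ∅ :=
      Set.eq_empty_of_forall_notMem fun ω => not_lt.mpr <|
        (by linarith [(abs_le.mp hμ).2] : μ - α ≤ -1).trans
          (by simpa using neg_one_le_one_div_card_mul_sum fun j (_ : j ∈ univ) => (hbdd j ω).1)
    rw [hempty, measure_empty, ENNReal.toReal_zero]
    positivity

/-- Bernstein-type exponential estimate for almost multiplicative systems of bounded
random variables: `P(X < μ - α) ≤ exp(-α²N/8) + ε·exp(N/4)` where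
`X = (1/N) ∑ X_j`. -/
theorem stmt5 {Ω : Type*} [MeasureSpace Ω] [IsProbabilityMeasure (volume : Measure Ω)]
    (N : ℕ) (hN : 0 < N) (X : Fin N → Ω → ℝ) (hmeas : ∀ j, Measurable (X j))
    (hbdd : ∀ j ω, -1 ≤ X j ω ∧ X j ω ≤ 1)
    (μ : ℝ) (hμ : 0 < μ) (hexp : ∀ j, (∫ ω, X j ω) = μ)
    (ε : ℝ) (hε : 0 < ε) (hε1 : ε < 1)
    (hmult : ∀ A : Finset (Fin N), A.Nonempty →
      (1 - ε) * μ ^ A.card ≤ (∫ ω, ∏ j ∈ A, X j ω) ∧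
      (∫ ω, ∏ j ∈ A, X j ω) ≤ (1 + ε) * μ ^ A.card)
    (α : ℝ) (hα : 0 < α) :
    (volume {ω | (1 / N : ℝ) * ∑ j, X j ω < μ - α}).toReal
      ≤ Real.exp (-(α ^ 2) * N / 8) + ε * Real.exp (N / 4) :=
  stmt5_general N hN X hmeas hbdd μ hexp ε hε hmult α hα
end

section
/- For every q > 2 and every γ > 0 there exists a real trigonometric polynomial φ such that: the mean of φ over T is zero, sup|φ| ≤ 1, the L² norm of φ (with respect to normalized Lebesgue measure) equals 1/2, and the ℓ^q norm of its Fourier coefficients is less than γ. -/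
open Finset Real Filter Topology

/-!
Take `φ = c ∑_{n < 2^k} ε_n cos ((n + 1) t)` with `c = 2^{-(k+1)/2}` and `ε` the Rudin–Shapiro
signs. By the parallelogram law the Rudin–Shapiro pair satisfies `|P_k|² + |Q_k|² = 2^{k+1}`
pointwise, and `|φ| ≤ c |P_k| ≤ 1`. Orthogonality of the cosines gives mean zero and
`‖φ‖₂² = c² 2^k / 2 = 1/4`. The `2^{k+1}` nonzero Fourier coefficients all have modulus `c/2`,
so `∑ |a_m|^q = 2^{k+1} (c/2)^q = (c/2)^{q-2} / 4`, which tends to `0` because `q > 2`.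
-/

noncomputable def cosPoly (b : ℕ → ℝ) (d : ℕ) (t : ℝ) : ℝ :=
  ∑ n ∈ range d, b n * cos ((n + 1) * t)

noncomputable def cosPolyCoeff (b : ℕ → ℝ) (m : ℤ) : ℂ :=
  if m = 0 then 0 else ((b (m.natAbs - 1) / 2 : ℝ) : ℂ)

theorem sum_Icc_neg_natCast {M : Type*} [AddCommMonoid M] (d : ℕ) (f : ℤ → M) :
    ∑ m ∈ Icc (-(d : ℤ)) d, f m = f 0 + ∑ n ∈ range d, (f (n + 1) + f (-(n + 1))) := by
  induction d with
  | zero => simp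
  | succ d ih =>
    have hIcc : Icc (-((d : ℤ) + 1)) ((d : ℤ) + 1)
        = insert (-((d : ℤ) + 1)) (insert ((d : ℤ) + 1) (Icc (-(d : ℤ)) d)) := by
      ext x; simp only [mem_Icc, mem_insert]; omega
    push_cast
    rw [hIcc, sum_insert (by simp only [mem_insert, mem_Icc]; omega),
      sum_insert (by simp only [mem_Icc]; omega), ih, sum_range_succ]
    abel

theorem integral_cos_int_mul {j : ℤ} (hj : j ≠ 0) :
    ∫ t in (0 : ℝ)..2 * π, cos (j * t) = 0 := by
  rw [intervalIntegral.integral_comp_mul_left cos (Int.cast_ne_zero.mpr hj), mul_zero,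
    integral_cos, sin_zero, show (j : ℝ) * (2 * π) = (2 * j : ℤ) * π by push_cast; ring,
    sin_int_mul_pi]
  simp

theorem integral_cos_mul_cos (m n : ℕ) :
    ∫ t in (0 : ℝ)..2 * π, cos ((m + 1) * t) * cos ((n + 1) * t) = if m = n then π else 0 := by
  have hprod : ∀ t : ℝ, cos ((m + 1) * t) * cos ((n + 1) * t)
      = (cos (((m - n : ℤ) : ℝ) * t) + cos (((m + n + 2 : ℤ) : ℝ) * t)) / 2 := by
    intro t
    push_cast
    rw [show ((m : ℝ) - n) * t = (m + 1) * t - (n + 1) * t by ring,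
      show ((m : ℝ) + n + 2) * t = (m + 1) * t + (n + 1) * t by ring, cos_sub, cos_add]
    ring
  have hint : ∀ j : ℤ, IntervalIntegrable (fun t => cos (j * t)) MeasureTheory.volume 0 (2 * π) :=
    fun j => (continuous_cos.comp (continuous_const.mul continuous_id)).intervalIntegrable _ _
  simp only [hprod]
  rw [intervalIntegral.integral_div, intervalIntegral.integral_add (hint _) (hint _),
    integral_cos_int_mul (by omega : (m + n + 2 : ℤ) ≠ 0)]
  split_ifs with h
  · subst h
    simp
  · rw [integral_cos_int_mul (by omega : (m - n : ℤ) ≠ 0)]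
    simp

theorem cosPolyCoeff_natCast_succ (b : ℕ → ℝ) (n : ℕ) :
    cosPolyCoeff b (n + 1) = ((b n / 2 : ℝ) : ℂ) := by
  rw [cosPolyCoeff, if_neg (by omega)]
  congr

theorem cosPolyCoeff_neg (b : ℕ → ℝ) (m : ℤ) : cosPolyCoeff b (-m) = cosPolyCoeff b m := by
  simp [cosPolyCoeff]

theorem cosPoly_eq_sum_exp (b : ℕ → ℝ) (d : ℕ) (t : ℝ) :
    (cosPoly b d t : ℂ) =
      ∑ m ∈ Icc (-(d : ℤ)) d, cosPolyCoeff b m * Complex.exp (m * Complex.I * t) := by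
  rw [sum_Icc_neg_natCast, cosPolyCoeff, if_pos rfl, zero_mul, zero_add, cosPoly]
  push_cast
  refine sum_congr rfl fun n _ => ?_
  rw [cosPolyCoeff_neg, cosPolyCoeff_natCast_succ]
  push_cast
  rw [show ((n : ℂ) + 1) * Complex.I * t = ((n + 1) * t) * Complex.I by ring,
    show -((n : ℂ) + 1) * Complex.I * t = -((n + 1) * t) * Complex.I by ring]
  linear_combination (b n / 2 : ℂ) * Complex.two_cos (((n : ℂ) + 1) * t)

theorem integral_cosPoly (b : ℕ → ℝ) (d : ℕ) : ∫ t in (0 : ℝ)..2 * π, cosPoly b d t = 0 := by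
  unfold cosPoly
  rw [intervalIntegral.integral_finsetSum fun n _ =>
    (by fun_prop : Continuous _).intervalIntegrable _ _]
  refine sum_eq_zero fun n _ => ?_
  rw [intervalIntegral.integral_const_mul, ← Nat.cast_succ, ← Int.cast_natCast,
    integral_cos_int_mul (by omega), mul_zero]

theorem integral_cosPoly_sq (b : ℕ → ℝ) (d : ℕ) :
    ∫ t in (0 : ℝ)..2 * π, cosPoly b d t ^ 2 = π * ∑ n ∈ range d, b n ^ 2 := by
  simp only [cosPoly, sq, sum_mul_sum]
  rw [intervalIntegral.integral_finsetSum fun n _ =>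
    (by fun_prop : Continuous _).intervalIntegrable _ _, mul_sum]
  refine sum_congr rfl fun n hn => ?_
  rw [intervalIntegral.integral_finsetSum fun m _ =>
    (by fun_prop : Continuous _).intervalIntegrable _ _]
  simp_rw [mul_mul_mul_comm (b n), intervalIntegral.integral_const_mul, integral_cos_mul_cos,
    mul_ite, mul_zero, sum_ite_eq, if_pos hn]
  ring

theorem sum_norm_cosPolyCoeff_rpow (b : ℕ → ℝ) (d : ℕ) {q : ℝ} (hq : q ≠ 0) :
    ∑ m ∈ Icc (-(d : ℤ)) d, ‖cosPolyCoeff b m‖ ^ q = 2 * ∑ n ∈ range d, |b n / 2| ^ q := by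
  rw [sum_Icc_neg_natCast, cosPolyCoeff, if_pos rfl, norm_zero, zero_rpow hq, zero_add, mul_sum]
  refine sum_congr rfl fun n _ => ?_
  rw [cosPolyCoeff_neg, cosPolyCoeff_natCast_succ, Complex.norm_real, norm_eq_abs]
  ring

noncomputable def expPoly (b : ℕ → ℝ) (d : ℕ) (t : ℝ) : ℂ :=
  ∑ n ∈ range d, (b n : ℂ) * Complex.exp (n * Complex.I * t)

theorem abs_cosPoly_le_norm_expPoly (b : ℕ → ℝ) (d : ℕ) (t : ℝ) :
    |cosPoly b d t| ≤ ‖expPoly b d t‖ := by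
  have hre : cosPoly b d t = (Complex.exp (t * Complex.I) * expPoly b d t).re := by
    rw [cosPoly, expPoly, mul_sum, Complex.re_sum]
    refine sum_congr rfl fun n _ => ?_
    rw [mul_left_comm, ← Complex.exp_add,
      show (t : ℂ) * Complex.I + n * Complex.I * t = (((n + 1) * t : ℝ) : ℂ) * Complex.I by
        push_cast; ring,
      Complex.re_ofReal_mul, Complex.exp_ofReal_mul_I_re]
  calc |cosPoly b d t| ≤ ‖Complex.exp (t * Complex.I) * expPoly b d t‖ :=
        hre ▸ Complex.abs_re_le_norm _
    _ = ‖expPoly b d t‖ := by rw [norm_mul, Complex.norm_exp_ofReal_mul_I, one_mul]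

theorem expPoly_add (b : ℕ → ℝ) (d d' : ℕ) (t : ℝ) :
    expPoly b (d + d') t =
      expPoly b d t + Complex.exp (d * Complex.I * t) * expPoly (fun n => b (d + n)) d' t := by
  rw [expPoly, sum_range_add, expPoly, expPoly, mul_sum]
  congr 1
  refine sum_congr rfl fun n _ => ?_
  push_cast
  rw [add_mul, add_mul, Complex.exp_add]
  ring

theorem expPoly_congr {b b' : ℕ → ℝ} {d : ℕ} (h : ∀ n < d, b n = b' n) (t : ℝ) :
    expPoly b d t = expPoly b' d t :=
  sum_congr rfl fun n hn => by rw [h n (mem_range.mp hn)]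

theorem expPoly_neg (b : ℕ → ℝ) (d : ℕ) (t : ℝ) :
    expPoly (fun n => -b n) d t = -expPoly b d t := by
  simp [expPoly]

-- The recursion `P_{k+1} = P_k + z^{2^k} Q_k`, `Q_{k+1} = P_k - z^{2^k} Q_k` on coefficients.
def rudinShapiroSigns : ℕ → (ℕ → ℝ) × (ℕ → ℝ)
  | 0 => (fun _ => 1, fun _ => 1)
  | k + 1 =>
    (fun n => if n < 2 ^ k then (rudinShapiroSigns k).1 n else (rudinShapiroSigns k).2 (n - 2 ^ k),
     fun n => if n < 2 ^ k then (rudinShapiroSigns k).1 n else -(rudinShapiroSigns k).2 (n - 2 ^ k))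

theorem abs_rudinShapiroSigns (k n : ℕ) :
    |(rudinShapiroSigns k).1 n| = 1 ∧ |(rudinShapiroSigns k).2 n| = 1 := by
  induction k generalizing n with
  | zero => simp [rudinShapiroSigns]
  | succ k ih =>
    simp only [rudinShapiroSigns]
    constructor <;> split <;> simp [ih]

noncomputable def rudinShapiroP (k : ℕ) : ℝ → ℂ := expPoly (rudinShapiroSigns k).1 (2 ^ k)

noncomputable def rudinShapiroQ (k : ℕ) : ℝ → ℂ := expPoly (rudinShapiroSigns k).2 (2 ^ k)

theorem rudinShapiroP_succ (k : ℕ) (t : ℝ) :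
    rudinShapiroP (k + 1) t =
      rudinShapiroP k t + Complex.exp ((2 ^ k : ℕ) * Complex.I * t) * rudinShapiroQ k t := by
  rw [rudinShapiroP, pow_succ, mul_two, expPoly_add]
  exact congrArg₂ (· + ·) (expPoly_congr (fun n hn => if_pos hn) t)
    (congrArg _ (expPoly_congr (fun n _ => by simp [rudinShapiroSigns]) t))

theorem rudinShapiroQ_succ (k : ℕ) (t : ℝ) :
    rudinShapiroQ (k + 1) t =
      rudinShapiroP k t - Complex.exp ((2 ^ k : ℕ) * Complex.I * t) * rudinShapiroQ k t := by
  rw [rudinShapiroQ, pow_succ, mul_two, expPoly_add, sub_eq_add_neg, ← mul_neg, rudinShapiroQ,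
    ← expPoly_neg]
  exact congrArg₂ (· + ·) (expPoly_congr (fun n hn => if_pos hn) t)
    (congrArg _ (expPoly_congr (fun n _ => by simp [rudinShapiroSigns]) t))

theorem norm_sq_rudinShapiroP_add_norm_sq_rudinShapiroQ (k : ℕ) (t : ℝ) :
    ‖rudinShapiroP k t‖ ^ 2 + ‖rudinShapiroQ k t‖ ^ 2 = 2 ^ (k + 1) := by
  induction k with
  | zero => norm_num [rudinShapiroP, rudinShapiroQ, expPoly, rudinShapiroSigns]
  | succ k ih =>
    have hunit : ‖Complex.exp ((2 ^ k : ℕ) * Complex.I * t)‖ = 1 := by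
      rw [show ((2 ^ k : ℕ) : ℂ) * Complex.I * t = ((2 ^ k * t : ℝ) : ℂ) * Complex.I by
        push_cast; ring, Complex.norm_exp_ofReal_mul_I]
    have hpar := parallelogram_law_with_norm ℝ (rudinShapiroP k t)
      (Complex.exp ((2 ^ k : ℕ) * Complex.I * t) * rudinShapiroQ k t)
    rw [norm_mul, hunit, one_mul] at hpar
    rw [rudinShapiroP_succ, rudinShapiroQ_succ, hpar, ih]
    ring

theorem norm_rudinShapiroP_le (k : ℕ) (t : ℝ) : ‖rudinShapiroP k t‖ ≤ √(2 ^ (k + 1)) :=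
  (le_sqrt (norm_nonneg _) (by positivity)).mpr <| by
    linarith [norm_sq_rudinShapiroP_add_norm_sq_rudinShapiroQ k t, sq_nonneg ‖rudinShapiroQ k t‖]

theorem cosPoly_const_mul (c : ℝ) (b : ℕ → ℝ) (d : ℕ) (t : ℝ) :
    cosPoly (fun n => c * b n) d t = c * cosPoly b d t := by
  simp only [cosPoly, mul_sum, mul_assoc]

noncomputable def rudinShapiroScale (k : ℕ) : ℝ := (√(2 ^ (k + 1)))⁻¹

theorem rudinShapiroScale_pos (k : ℕ) : 0 < rudinShapiroScale k := by
  unfold rudinShapiroScale; positivity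

theorem rudinShapiroScale_sq (k : ℕ) : rudinShapiroScale k ^ 2 = (2 ^ (k + 1))⁻¹ := by
  rw [rudinShapiroScale, inv_pow, sq_sqrt (by positivity)]

theorem tendsto_rudinShapiroScale : Tendsto rudinShapiroScale atTop (𝓝 0) :=
  tendsto_inv_atTop_zero.comp <| tendsto_sqrt_atTop.comp <|
    (tendsto_pow_atTop_atTop_of_one_lt one_lt_two).comp (tendsto_add_atTop_nat 1)

noncomputable def normalizedRudinShapiro (k n : ℕ) : ℝ :=
  rudinShapiroScale k * (rudinShapiroSigns k).1 n

theorem abs_cosPoly_normalizedRudinShapiro_le_one (k : ℕ) (t : ℝ) :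
    |cosPoly (normalizedRudinShapiro k) (2 ^ k) t| ≤ 1 := by
  have hc := rudinShapiroScale_pos k
  unfold normalizedRudinShapiro
  rw [cosPoly_const_mul, abs_mul, abs_of_pos hc]
  calc rudinShapiroScale k * |cosPoly (rudinShapiroSigns k).1 (2 ^ k) t|
      ≤ rudinShapiroScale k * √(2 ^ (k + 1)) := by
        gcongr
        exact (abs_cosPoly_le_norm_expPoly _ _ t).trans (norm_rudinShapiroP_le k t)
    _ = 1 := inv_mul_cancel₀ (by positivity)

theorem integral_cosPoly_normalizedRudinShapiro_sq (k : ℕ) :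
    ∫ t in (0 : ℝ)..2 * π, cosPoly (normalizedRudinShapiro k) (2 ^ k) t ^ 2 = π / 2 := by
  have hsq : ∀ n, normalizedRudinShapiro k n ^ 2 = (2 ^ (k + 1))⁻¹ := fun n => by
    rw [normalizedRudinShapiro, mul_pow, rudinShapiroScale_sq, ← sq_abs,
      (abs_rudinShapiroSigns k n).1, one_pow, mul_one]
  rw [integral_cosPoly_sq]
  simp only [hsq, sum_const, card_range, nsmul_eq_mul]
  push_cast
  field_simp
  ring

theorem sum_norm_cosPolyCoeff_normalizedRudinShapiro_rpow (k : ℕ) {q : ℝ} (hq : q ≠ 0) :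
    ∑ m ∈ Icc (-(2 ^ k : ℕ) : ℤ) (2 ^ k : ℕ), ‖cosPolyCoeff (normalizedRudinShapiro k) m‖ ^ q =
      (rudinShapiroScale k / 2) ^ (q - 2) / 4 := by
  have hc := rudinShapiroScale_pos k
  have habs : ∀ n, |normalizedRudinShapiro k n / 2| = rudinShapiroScale k / 2 := fun n => by
    rw [normalizedRudinShapiro, abs_div, abs_mul, (abs_rudinShapiroSigns k n).1, abs_of_pos hc,
      mul_one, abs_two]
  rw [sum_norm_cosPolyCoeff_rpow _ _ hq]
  simp only [habs, sum_const, card_range, nsmul_eq_mul]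
  rw [rpow_sub (by positivity), rpow_two, div_pow, rudinShapiroScale_sq]
  push_cast
  field_simp
  ring

/-- Auxiliary polynomials: for every `q > 2` and `γ > 0` there is a real trigonometric
polynomial `φ` with zero mean, `‖φ‖_∞ ≤ 1`, `‖φ‖_{L²} = 1/2`, and `‖φ‖_{A_q} < γ`. -/
theorem stmt9 (q γ : ℝ) (hq : 2 < q) (hγ : 0 < γ) :
    ∃ (d : ℕ) (a : ℤ → ℂ) (φ : ℝ → ℝ),
      (∀ t : ℝ, (φ t : ℂ) =
        ∑ k ∈ Finset.Icc (-(d : ℤ)) d, a k * Complex.exp (k * Complex.I * t)) ∧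
      (∫ t in (0 : ℝ)..(2 * Real.pi), φ t) = 0 ∧
      (∀ t : ℝ, |φ t| ≤ 1) ∧
      (1 / (2 * Real.pi)) * (∫ t in (0 : ℝ)..(2 * Real.pi), (φ t) ^ 2) = (1 / 2) ^ 2 ∧
      (∑ k ∈ Finset.Icc (-(d : ℤ)) d, ‖a k‖ ^ q) < γ ^ q := by
  have hscale : Tendsto (fun k => (rudinShapiroScale k / 2) ^ (q - 2)) atTop (𝓝 0) := by
    simpa [zero_rpow (by linarith : q - 2 ≠ 0)] using
      (tendsto_rudinShapiroScale.div_const 2).rpow_const (p := q - 2) (Or.inr (by linarith))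
  obtain ⟨k, hk⟩ := (hscale.eventually (gt_mem_nhds (by positivity : 0 < 4 * γ ^ q))).exists
  refine ⟨2 ^ k, cosPolyCoeff (normalizedRudinShapiro k),
    cosPoly (normalizedRudinShapiro k) (2 ^ k), cosPoly_eq_sum_exp _ _, integral_cosPoly _ _, abs_cosPoly_normalizedRudinShapiro_le_one k,
    ?_, ?_⟩
  · rw [integral_cosPoly_normalizedRudinShapiro_sq]
    field_simp
  · rw [sum_norm_cosPolyCoeff_normalizedRudinShapiro_rpow k (by linarith)]
    linarith
end

section
/- With φ, w, N, ν, s, λ_s as in the Riesz-product construction (∫φ = 0, ‖φ‖_∞ ≤ 1, ‖w‖_∞ ≤ 1, ν > 2 max(deg φ, N deg w), 0 < s < 1), define random variables X_j(t) = w(t)·φ(ν^j t) on the probability space (T, μ_s) where dμ_s = λ_s dt/2π. Then for every non-empty subset A ⊂ {1,...,N}: ∫_T (∏_{j∈A} X_j) dμ_s = (s·∫_T φ(t)² dt/2π)^{|A|} · (∫_T w(t)^{2|A|} dt/2π). -/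
/-!
Write `X_j(t) = w(t) φ(ν^(j+1) t)` and expand the Riesz product `∏_{j<N} (1 + s X_j)` over the
subsets `B ⊆ {0, …, N-1}`. Against `∏_{j∈A} X_j`, the term of `B` is
`s^|B| w^(|A|+|B|) ∏_j φ^(e_j)(ν^(j+1) t)` with `e_j = [j ∈ A] + [j ∈ B] ≤ 2`.

All trigonometric polynomials occurring here have degree `< ν`, and for such lacunary products
the mean is multiplicative: if `f` has degree `< M`, then `⟨f · g(M ·)⟩ = ⟨f⟩⟨g⟩`, because a
frequency of absolute value `< M` cannot cancel a nonzero multiple of `M`. Hence the term of `B`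
has mean `s^|B| ⟨w^(|A|+|B|)⟩ ∏_j ⟨φ^(e_j)⟩`, which vanishes unless `B = A` since `⟨φ⟩ = 0`.
-/

open Complex Finset Real

noncomputable def trigMonomial (k : ℤ) (t : ℝ) : ℂ := exp (k * I * t)

noncomputable def trigPoly (D : ℕ) : Submodule ℂ (ℝ → ℂ) :=
  Submodule.span ℂ (trigMonomial '' Set.Icc (-(D : ℤ)) D)

noncomputable def circleMean (f : ℝ → ℂ) : ℂ := (2 * π : ℂ)⁻¹ * ∫ t in (0 : ℝ)..2 * π, f t

lemma trigMonomial_add (k l : ℤ) : trigMonomial (k + l) = trigMonomial k * trigMonomial l := by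
  ext t
  simp only [trigMonomial, Pi.mul_apply, ← Complex.exp_add]
  push_cast
  ring_nf

lemma trigMonomial_mul_apply (k : ℤ) (M : ℕ) (t : ℝ) :
    trigMonomial k (M * t) = trigMonomial (M * k) t := by
  simp only [trigMonomial]
  push_cast
  ring_nf

@[simp] lemma trigMonomial_zero : trigMonomial 0 = 1 := by
  ext t
  simp [trigMonomial]

lemma continuous_trigMonomial (k : ℤ) : Continuous (trigMonomial k) := by
  unfold trigMonomial
  fun_prop

lemma circleMean_trigMonomial (k : ℤ) : circleMean (trigMonomial k) = if k = 0 then 1 else 0 := by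
  split_ifs with hk
  · simp [circleMean, trigMonomial, hk]
    field_simp
  · have hkI : (k : ℂ) * I ≠ 0 := by simp [hk]
    have hperiod : exp (k * I * (2 * π)) = 1 := by
      rw [← exp_int_mul_two_pi_mul_I k]
      ring_nf
    simp [circleMean, trigMonomial, integral_exp_mul_complex hkI, hperiod]

@[simp] lemma circleMean_zero : circleMean 0 = 0 := by
  simp [circleMean]

lemma circleMean_one : circleMean 1 = 1 := by
  simpa using circleMean_trigMonomial 0

lemma circleMean_add {f g : ℝ → ℂ} (hf : Continuous f) (hg : Continuous g) :
    circleMean (f + g) = circleMean f + circleMean g := by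
  simp only [circleMean, Pi.add_apply]
  rw [intervalIntegral.integral_add (hf.intervalIntegrable _ _) (hg.intervalIntegrable _ _),
    mul_add]

lemma circleMean_smul (c : ℂ) (f : ℝ → ℂ) : circleMean (c • f) = c * circleMean f := by
  simp only [circleMean, Pi.smul_apply, smul_eq_mul, intervalIntegral.integral_const_mul]
  ring

lemma circleMean_finset_sum {ι : Type*} (s : Finset ι) {f : ι → ℝ → ℂ}
    (hf : ∀ i ∈ s, Continuous (f i)) :
    circleMean (∑ i ∈ s, f i) = ∑ i ∈ s, circleMean (f i) := by
  simp only [circleMean, Finset.sum_apply]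
  rw [intervalIntegral.integral_finsetSum fun i hi => (hf i hi).intervalIntegrable _ _,
    Finset.mul_sum]

lemma ofReal_circleMean (f : ℝ → ℝ) :
    (((1 / (2 * π)) * ∫ t in (0 : ℝ)..2 * π, f t : ℝ) : ℂ) = circleMean (fun t => f t) := by
  simp [circleMean, intervalIntegral.integral_ofReal]

namespace trigPoly

lemma trigMonomial_mem {D : ℕ} {k : ℤ} (hk : |k| ≤ D) : trigMonomial k ∈ trigPoly D :=
  Submodule.subset_span ⟨k, abs_le.mp hk, rfl⟩

lemma mem_of_eq_sum {D : ℕ} {f : ℝ → ℂ} (c : ℤ → ℂ)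
    (hf : ∀ t, f t = ∑ k ∈ Finset.Icc (-(D : ℤ)) D, c k * exp (k * I * t)) :
    f ∈ trigPoly D := by
  have : f = ∑ k ∈ Finset.Icc (-(D : ℤ)) D, c k • trigMonomial k := by
    ext t
    simp [hf, trigMonomial]
  rw [this]
  exact Submodule.sum_mem _ fun k hk =>
    Submodule.smul_mem _ _ (trigMonomial_mem (abs_le.mpr (Finset.mem_Icc.mp hk)))

lemma mono {D E : ℕ} (h : D ≤ E) : trigPoly D ≤ trigPoly E :=
  Submodule.span_mono (Set.image_mono (Set.Icc_subset_Icc (by omega) (by omega)))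

lemma continuous {D : ℕ} {f : ℝ → ℂ} (hf : f ∈ trigPoly D) : Continuous f := by
  induction hf using Submodule.span_induction with
  | mem f hf => obtain ⟨k, -, rfl⟩ := hf; exact continuous_trigMonomial k
  | zero => exact continuous_const
  | add f g _ _ hf hg => exact hf.add hg
  | smul c f _ hf => exact hf.const_smul c

lemma mul_mem {D E : ℕ} {f g : ℝ → ℂ} (hf : f ∈ trigPoly D) (hg : g ∈ trigPoly E) :
    f * g ∈ trigPoly (D + E) := by
  have hfg := Submodule.mul_mem_mul hf hg
  rw [trigPoly, trigPoly, Submodule.span_mul_span] at hfg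
  refine Submodule.span_mono ?_ hfg
  rintro _ ⟨_, ⟨k, hk, rfl⟩, _, ⟨l, hl, rfl⟩, rfl⟩
  exact ⟨k + l, by simp only [Set.mem_Icc] at hk hl ⊢; push_cast; omega,
    trigMonomial_add k l⟩

lemma pow_mem {D : ℕ} {f : ℝ → ℂ} (hf : f ∈ trigPoly D) (n : ℕ) : f ^ n ∈ trigPoly (n * D) := by
  induction n with
  | zero => simpa using trigMonomial_mem (D := 0) (k := 0) le_rfl
  | succ n ih => simpa [pow_succ, add_mul] using mul_mem ih hf

lemma comp_mul_mem {D : ℕ} {f : ℝ → ℂ} (hf : f ∈ trigPoly D) (M : ℕ) :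
    (fun t => f (M * t)) ∈ trigPoly (M * D) := by
  have hmap : Submodule.map (LinearMap.funLeft ℂ ℂ fun t : ℝ => M * t) (trigPoly D)
      ≤ trigPoly (M * D) := by
    rw [trigPoly, Submodule.map_span_le]
    rintro _ ⟨k, hk, rfl⟩
    have hMk : |(M : ℤ) * k| ≤ (M * D : ℕ) := by
      rw [abs_mul, Nat.abs_cast]
      push_cast
      exact mul_le_mul_of_nonneg_left (abs_le.mpr hk) (by positivity)
    convert trigMonomial_mem hMk using 1
    ext t
    exact trigMonomial_mul_apply k M t
  exact hmap (Submodule.mem_map_of_mem hf)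

end trigPoly

lemma circleMean_trigMonomial_mul_comp {D M : ℕ} (hDM : D < M) {k : ℤ} (hk : |k| ≤ D) (l : ℤ) :
    circleMean (trigMonomial k * fun t => trigMonomial l (M * t)) =
      circleMean (trigMonomial k) * circleMean (trigMonomial l) := by
  have hprod : (trigMonomial k * fun t => trigMonomial l (M * t)) = trigMonomial (k + M * l) := by
    ext t
    rw [trigMonomial_add, Pi.mul_apply, Pi.mul_apply, trigMonomial_mul_apply]
  have hM : (0 : ℤ) < M := by omega
  have hfreq : k + M * l = 0 ↔ k = 0 ∧ l = 0 := by
    refine ⟨fun h => ?_, fun ⟨hk0, hl0⟩ => by simp [hk0, hl0]⟩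
    have hk0 : k = 0 :=
      Int.eq_zero_of_abs_lt_dvd (m := M) ⟨-l, by linear_combination h⟩ (by omega)
    subst hk0
    exact ⟨rfl, (by simpa using h : M = 0 ∨ l = 0).resolve_left (by omega)⟩
  simp only [hprod, circleMean_trigMonomial, hfreq, ite_and, ite_mul, one_mul, zero_mul]

lemma circleMean_mul_comp {D E M : ℕ} (hDM : D < M) {f g : ℝ → ℂ} (hf : f ∈ trigPoly D)
    (hg : g ∈ trigPoly E) :
    circleMean (f * fun t => g (M * t)) = circleMean f * circleMean g := by
  induction hf, hg using Submodule.span_induction₂ with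
  | mem_mem f g hf hg =>
    obtain ⟨k, hk, rfl⟩ := hf
    obtain ⟨l, -, rfl⟩ := hg
    exact circleMean_trigMonomial_mul_comp hDM (abs_le.mpr hk) l
  | zero_left => simp
  | zero_right => exact (congrArg circleMean (mul_zero _)).trans (by simp)
  | add_left f₁ f₂ g hf₁ hf₂ hg ih₁ ih₂ =>
    have hG : Continuous fun t => g (M * t) := (trigPoly.continuous hg).comp (by fun_prop)
    rw [add_mul, circleMean_add ((trigPoly.continuous hf₁).mul hG)
      ((trigPoly.continuous hf₂).mul hG), circleMean_add (trigPoly.continuous hf₁)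
      (trigPoly.continuous hf₂), ih₁, ih₂, add_mul]
  | add_right f g₁ g₂ hf hg₁ hg₂ ih₁ ih₂ =>
    have hG₁ : Continuous fun t => g₁ (M * t) := (trigPoly.continuous hg₁).comp (by fun_prop)
    have hG₂ : Continuous fun t => g₂ (M * t) := (trigPoly.continuous hg₂).comp (by fun_prop)
    change circleMean (f * ((fun t => g₁ (M * t)) + fun t => g₂ (M * t))) = _
    rw [mul_add, circleMean_add ((trigPoly.continuous hf).mul hG₁)
      ((trigPoly.continuous hf).mul hG₂), circleMean_add (trigPoly.continuous hg₁)
      (trigPoly.continuous hg₂), ih₁, ih₂, mul_add]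
  | smul_left c f g _ _ ih =>
    rw [smul_mul_assoc, circleMean_smul, circleMean_smul, ih, mul_assoc]
  | smul_right c f g _ _ ih =>
    change circleMean (f * c • fun t => g (M * t)) = _
    rw [mul_smul_comm, circleMean_smul, circleMean_smul, ih, mul_left_comm]

section Lacunary

variable {ν : ℕ} {f : ℝ → ℂ} {g : ℕ → ℝ → ℂ}

lemma mul_prod_range_succ_comp_pow (n : ℕ) :
    (f * fun t => ∏ j ∈ range (n + 1), g j ((ν : ℝ) ^ (j + 1) * t)) =
      (f * fun t => ∏ j ∈ range n, g j ((ν : ℝ) ^ (j + 1) * t)) *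
        fun t => g n ((ν ^ (n + 1) : ℕ) * t) := by
  ext t
  simp [prod_range_succ, mul_assoc]

lemma mul_prod_comp_pow_mem_trigPoly (hν : 0 < ν) (hf : f ∈ trigPoly (ν - 1))
    (hg : ∀ j, g j ∈ trigPoly (ν - 1)) (n : ℕ) :
    (f * fun t => ∏ j ∈ range n, g j ((ν : ℝ) ^ (j + 1) * t)) ∈ trigPoly (ν ^ (n + 1) - 1) := by
  induction n with
  | zero => simpa [Pi.one_def.symm] using hf
  | succ n ih =>
    have hdeg : ν ^ (n + 1) - 1 + ν ^ (n + 1) * (ν - 1) = ν ^ (n + 1 + 1) - 1 := by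
      have hpow : 1 ≤ ν ^ (n + 1) := Nat.one_le_pow _ _ hν
      zify [hν, hpow, Nat.one_le_pow (n + 1 + 1) ν hν]
      ring
    rw [mul_prod_range_succ_comp_pow, ← hdeg]
    exact trigPoly.mul_mem ih (trigPoly.comp_mul_mem (hg n) _)

lemma circleMean_mul_prod_comp_pow (hν : 0 < ν) (hf : f ∈ trigPoly (ν - 1))
    (hg : ∀ j, g j ∈ trigPoly (ν - 1)) (n : ℕ) :
    circleMean (f * fun t => ∏ j ∈ range n, g j ((ν : ℝ) ^ (j + 1) * t)) =
      circleMean f * ∏ j ∈ range n, circleMean (g j) := by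
  induction n with
  | zero => simp [Pi.one_def.symm]
  | succ n ih =>
    have hdeg : ν ^ (n + 1) - 1 < ν ^ (n + 1) := Nat.sub_lt (Nat.pow_pos hν) one_pos
    rw [mul_prod_range_succ_comp_pow, circleMean_mul_comp hdeg
      (mul_prod_comp_pow_mem_trigPoly hν hf hg n) (hg n), ih, prod_range_succ, mul_assoc]

end Lacunary

section Expansion

variable {ι R : Type*} [DecidableEq ι] [CommRing R]

lemma prod_pow_ite_mem {S A : Finset ι} (hA : A ⊆ S) (x : ι → R) :
    ∏ j ∈ S, x j ^ (if j ∈ A then 1 else 0) = ∏ j ∈ A, x j := by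
  simp only [pow_ite, pow_one, pow_zero, prod_ite_mem, inter_eq_right.mpr hA]

lemma prod_mul_prod_one_add_eq_sum {S A : Finset ι} (hA : A ⊆ S) (s a : R) (x : ι → R) :
    (∏ j ∈ A, a * x j) * ∏ j ∈ S, (1 + s * a * x j) =
      ∑ B ∈ S.powerset, s ^ #B * (a ^ (#A + #B) *
        ∏ j ∈ S, x j ^ ((if j ∈ A then 1 else 0) + if j ∈ B then 1 else 0)) := by
  simp_rw [add_comm (1 : R), prod_add, prod_const_one, mul_one, mul_sum]
  refine sum_congr rfl fun B hB => ?_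
  simp only [pow_add, prod_mul_distrib, prod_const, prod_pow_ite_mem hA,
    prod_pow_ite_mem (mem_powerset.mp hB)]
  ring

end Expansion

section RieszProduct

variable {dφ dw N ν : ℕ} {φ w : ℝ → ℂ}

lemma circleMean_rieszProduct_term (hφ : φ ∈ trigPoly dφ) (hw : w ∈ trigPoly dw)
    (hφ0 : circleMean φ = 0) (hφν : 2 * dφ < ν) (hwν : 2 * N * dw < ν) {A B : Finset ℕ}
    (hA : A ⊆ range N) (hB : B ⊆ range N) :
    circleMean (w ^ (#A + #B) * fun t => ∏ j ∈ range N,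
        (φ ^ ((if j ∈ A then 1 else 0) + if j ∈ B then 1 else 0)) ((ν : ℝ) ^ (j + 1) * t)) =
      if B = A then circleMean (w ^ (2 * #A)) * circleMean (φ ^ 2) ^ #A else 0 := by
  have hcard : #A + #B ≤ 2 * N := by
    have hA' := card_le_card hA
    have hB' := card_le_card hB
    rw [card_range] at hA' hB'
    omega
  have hwdeg : w ^ (#A + #B) ∈ trigPoly (ν - 1) :=
    trigPoly.mono (by have := Nat.mul_le_mul_right dw hcard; omega) (trigPoly.pow_mem hw _)
  have hφdeg : ∀ j, φ ^ ((if j ∈ A then 1 else 0) + if j ∈ B then 1 else 0) ∈ trigPoly (ν - 1) :=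
    fun j => trigPoly.mono (by split_ifs <;> omega) (trigPoly.pow_mem hφ _)
  rw [circleMean_mul_prod_comp_pow (by omega) hwdeg hφdeg]
  split_ifs with hBA
  · subst hBA
    have hfactor : ∀ j ∈ range N,
        circleMean (φ ^ ((if j ∈ B then 1 else 0) + if j ∈ B then 1 else 0)) =
          if j ∈ B then circleMean (φ ^ 2) else 1 := fun j _ => by
      split_ifs <;> simp [circleMean_one]
    rw [prod_congr rfl hfactor, prod_ite_mem, inter_eq_right.mpr hA, prod_const, two_mul]
  · obtain ⟨j, hj⟩ : ∃ j, ¬(j ∈ B ↔ j ∈ A) := by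
      simpa [Finset.ext_iff] using hBA
    have hjN : j ∈ range N := by
      by_cases hjA : j ∈ A
      · exact hA hjA
      · exact hB (by tauto)
    rw [prod_eq_zero hjN (by by_cases hjA : j ∈ A <;> simp_all), mul_zero]

theorem circleMean_prod_mul_rieszProduct (hφ : φ ∈ trigPoly dφ) (hw : w ∈ trigPoly dw)
    (hφ0 : circleMean φ = 0) (hφν : 2 * dφ < ν) (hwν : 2 * N * dw < ν) (s : ℂ)
    {A : Finset ℕ} (hA : A ⊆ range N) :
    circleMean (fun t => (∏ j ∈ A, w t * φ ((ν : ℝ) ^ (j + 1) * t)) *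
        ∏ j ∈ range N, (1 + s * w t * φ ((ν : ℝ) ^ (j + 1) * t))) =
      (s * circleMean (φ ^ 2)) ^ #A * circleMean (w ^ (2 * #A)) := by
  have hexpand : (fun t => (∏ j ∈ A, w t * φ ((ν : ℝ) ^ (j + 1) * t)) *
        ∏ j ∈ range N, (1 + s * w t * φ ((ν : ℝ) ^ (j + 1) * t))) =
      ∑ B ∈ (range N).powerset, s ^ #B • (w ^ (#A + #B) * fun t => ∏ j ∈ range N,
        (φ ^ ((if j ∈ A then 1 else 0) + if j ∈ B then 1 else 0)) ((ν : ℝ) ^ (j + 1) * t)) := by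
    ext t
    simp only [Finset.sum_apply, Pi.smul_apply, Pi.mul_apply, Pi.pow_apply, smul_eq_mul]
    exact prod_mul_prod_one_add_eq_sum hA s (w t) _
  have hcont : ∀ B ∈ (range N).powerset, Continuous (s ^ #B • (w ^ (#A + #B) *
      fun t => ∏ j ∈ range N,
        (φ ^ ((if j ∈ A then 1 else 0) + if j ∈ B then 1 else 0)) ((ν : ℝ) ^ (j + 1) * t))) :=
    fun B _ => (((trigPoly.continuous hw).pow _).mul (continuous_finsetProd _ fun j _ =>
      ((trigPoly.continuous hφ).pow _).comp (by fun_prop))).const_smul _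
  rw [hexpand, circleMean_finset_sum _ hcont, sum_congr rfl fun B hB => by
      rw [circleMean_smul, circleMean_rieszProduct_term hφ hw hφ0 hφν hwν hA
        (mem_powerset.mp hB), mul_ite, mul_zero],
    sum_ite_eq', if_pos (mem_powerset.mpr hA)]
  ring

end RieszProduct

theorem stmt12_general (dφ dw : ℕ) (aφ aw : ℤ → ℂ) (φ w : ℝ → ℝ)
    (hφrep : ∀ t : ℝ, (φ t : ℂ) =
      ∑ k ∈ Finset.Icc (-(dφ : ℤ)) dφ, aφ k * Complex.exp (k * Complex.I * t))
    (hwrep : ∀ t : ℝ, (w t : ℂ) =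
      ∑ k ∈ Finset.Icc (-(dw : ℤ)) dw, aw k * Complex.exp (k * Complex.I * t))
    (hφ0 : (∫ t in (0 : ℝ)..(2 * Real.pi), φ t) = 0)
    (N : ℕ) (ν : ℕ) (hν : 2 * max dφ (N * dw) < ν)
    (s : ℝ)
    (A : Finset (Fin N)) :
    (1 / (2 * Real.pi)) * (∫ t in (0 : ℝ)..(2 * Real.pi),
        (∏ j ∈ A, w t * φ ((ν : ℝ) ^ ((j : ℕ) + 1) * t)) *
          ∏ j ∈ Finset.range N, (1 + s * w t * φ ((ν : ℝ) ^ (j + 1) * t)))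
      = (s * ((1 / (2 * Real.pi)) * ∫ t in (0 : ℝ)..(2 * Real.pi), (φ t) ^ 2)) ^ A.card *
        ((1 / (2 * Real.pi)) * ∫ t in (0 : ℝ)..(2 * Real.pi), (w t) ^ (2 * A.card)) := by
  have hφ : (fun t => (φ t : ℂ)) ∈ trigPoly dφ := trigPoly.mem_of_eq_sum aφ hφrep
  have hw : (fun t => (w t : ℂ)) ∈ trigPoly dw := trigPoly.mem_of_eq_sum aw hwrep
  have hφmean : circleMean (fun t => (φ t : ℂ)) = 0 := by
    rw [← ofReal_circleMean, hφ0, mul_zero, ofReal_zero]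
  have hA : A.map Fin.valEmbedding ⊆ range N := fun j hj => by
    obtain ⟨i, -, rfl⟩ := mem_map.mp hj
    exact mem_range.mpr i.isLt
  have hφν : 2 * dφ < ν := by omega
  have hwν : 2 * N * dw < ν := by rw [mul_assoc]; omega
  have key := circleMean_prod_mul_rieszProduct hφ hw hφmean hφν hwν s hA
  simp only [card_map, prod_map, Fin.valEmbedding_apply] at key
  apply ofReal_injective
  rw [ofReal_circleMean, ofReal_mul, ofReal_pow, ofReal_mul, ofReal_circleMean, ofReal_circleMean]
  convert key using 3 <;> push_cast <;> rfl

/-- Multiplicative moments with respect to the Riesz-product measure: with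
`X_j(t) = w(t)·φ(ν^j t)` and `dμ_s = λ_s dt/2π`, for every non-empty
`A ⊆ {1,…,N}` one has
`∫ ∏_{j∈A} X_j dμ_s = (s ∫ φ² dt/2π)^{|A|} · ∫ w^{2|A|} dt/2π`. -/
theorem stmt12 (dφ dw : ℕ) (aφ aw : ℤ → ℂ) (φ w : ℝ → ℝ)
    (hφrep : ∀ t : ℝ, (φ t : ℂ) =
      ∑ k ∈ Finset.Icc (-(dφ : ℤ)) dφ, aφ k * Complex.exp (k * Complex.I * t))
    (hwrep : ∀ t : ℝ, (w t : ℂ) =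
      ∑ k ∈ Finset.Icc (-(dw : ℤ)) dw, aw k * Complex.exp (k * Complex.I * t))
    (hφ0 : (∫ t in (0 : ℝ)..(2 * Real.pi), φ t) = 0)
    (hφsup : ∀ t, |φ t| ≤ 1) (hwsup : ∀ t, |w t| ≤ 1)
    (N : ℕ) (hN : 0 < N) (ν : ℕ) (hν : 2 * max dφ (N * dw) < ν)
    (s : ℝ) (hs : 0 < s) (hs1 : s < 1)
    (A : Finset (Fin N)) (hA : A.Nonempty) :
    (1 / (2 * Real.pi)) * (∫ t in (0 : ℝ)..(2 * Real.pi),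
        (∏ j ∈ A, w t * φ ((ν : ℝ) ^ ((j : ℕ) + 1) * t)) *
          ∏ j ∈ Finset.range N, (1 + s * w t * φ ((ν : ℝ) ^ (j + 1) * t)))
      = (s * ((1 / (2 * Real.pi)) * ∫ t in (0 : ℝ)..(2 * Real.pi), (φ t) ^ 2)) ^ A.card *
        ((1 / (2 * Real.pi)) * ∫ t in (0 : ℝ)..(2 * Real.pi), (w t) ^ (2 * A.card)) :=
  stmt12_general dφ dw aφ aw φ w hφrep hwrep hφ0 N ν hν s A
end

section
/- Let T*: C(K)* → B* be the adjoint of the restriction operator T: B → C(K), where B is the Wiener algebra A(T) equipped with the norm ‖f‖_B = ‖f‖_A + (1/ε)‖f‖_{A_p} (p > 1, ε > 0 fixed), and K ⊂ T is compact. Then for every measure μ supported on K, ‖T*μ‖_{B*} ≥ limsup_{|n|→∞} |μ̂(n)|. -/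
/-!
Let `t` be a set of `N` frequencies at which `|μ̂|` exceeds `c`. The trigonometric polynomial
`f = D⁻¹ ∑_{n ∈ t} cₙ e₋ₙ`, with unimodular `cₙ` aligning the phases of the `μ̂(n)` and
`D = N + ε⁻¹ N^{1/p}` its unnormalised `B`-norm, has `‖f‖_B = 1` and `|⟨f, μ⟩| ≥ c N / D`.
Since `p > 1`, `N / D → 1` as `N → ∞`, and infinitely many such frequencies exist for every
`c` below the limsup.
-/

open MeasureTheory Filter Topology Finset

/-- The norm `‖f‖_A + (1/ε)‖f‖_{A_p}` of `f = ∑ₖ a k eₖ`, read off its Fourier coefficients. -/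
noncomputable def wienerNorm (p ε : ℝ) (a : ℤ → ℂ) : ℝ :=
  (∑' k, ‖a k‖) + 1 / ε * (∑' k, ‖a k‖ ^ p) ^ (1 / p)

lemma wienerNorm_of_norm_eq_ite {p : ℝ} (hp : p ≠ 0) (ε : ℝ) {r : ℝ} (hr : 0 ≤ r)
    {s : Finset ℤ} {a : ℤ → ℂ} (ha : ∀ k, ‖a k‖ = if k ∈ s then r else 0) :
    wienerNorm p ε a = r * (#s + 1 / ε * (#s : ℝ) ^ (1 / p)) := by
  have h1 : (∑' k, ‖a k‖) = #s * r := by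
    rw [tsum_eq_sum (s := s) fun k hk => by simp [ha, hk],
      sum_congr rfl fun k hk => by rw [ha, if_pos hk], sum_const, nsmul_eq_mul]
  have hp' : (∑' k, ‖a k‖ ^ p) = #s * r ^ p := by
    rw [tsum_eq_sum (s := s) fun k hk => by simp [ha, hk, Real.zero_rpow hp],
      sum_congr rfl fun k hk => by rw [ha, if_pos hk], sum_const, nsmul_eq_mul]
  rw [wienerNorm, h1, hp', Real.mul_rpow (Nat.cast_nonneg _) (by positivity), ← Real.rpow_mul hr,
    mul_one_div_cancel hp, Real.rpow_one]
  ring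

lemma tendsto_natCast_div_add_mul_rpow {p : ℝ} (hp : 1 < p) (C : ℝ) :
    Tendsto (fun N : ℕ => (N : ℝ) / (N + C * (N : ℝ) ^ (1 / p))) atTop (𝓝 1) := by
  have hpow : Tendsto (fun N : ℕ => (N : ℝ) ^ (1 / p - 1)) atTop (𝓝 0) := by
    have h : 0 < 1 - 1 / p := by rw [sub_pos, div_lt_one (by linarith)]; exact hp
    simpa [Function.comp_def] using (tendsto_rpow_neg_atTop h).comp tendsto_natCast_atTop_atTop
  have hlim : Tendsto (fun N : ℕ => (1 + C * (N : ℝ) ^ (1 / p - 1))⁻¹) atTop (𝓝 1) := by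
    simpa using ((hpow.const_mul C).const_add 1).inv₀ (by simp)
  refine hlim.congr' ((eventually_ge_atTop 1).mono fun N hN => ?_)
  have hN : (0 : ℝ) < N := by exact_mod_cast hN
  rw [Real.rpow_sub_one hN.ne']
  field_simp

lemma limsup_cofinite_le_of_sum_div_le {ι : Type*} [Infinite ι] {u : ι → ℝ} (hu : ∀ i, 0 ≤ u i)
    {d : ℕ → ℝ} (hd : ∀ N, 0 ≤ d N) (hd1 : Tendsto (fun N : ℕ => N / d N) atTop (𝓝 1)) {B : ℝ}
    (hB : ∀ t : Finset ι, (∑ i ∈ t, u i) / d #t ≤ B) :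
    limsup u cofinite ≤ B := by
  refine le_of_forall_lt_imp_le_of_dense fun c hc => ?_
  have hinf : {i | c < u i}.Infinite :=
    frequently_cofinite_iff_infinite.1 <|
      frequently_lt_of_lt_limsup (isCoboundedUnder_le_of_le _ hu) hc
  have hcN : ∀ N : ℕ, c * (N / d N) ≤ B := by
    intro N
    obtain ⟨t, ht, rfl⟩ := hinf.exists_subset_card_eq N
    calc c * (#t / d #t) = (∑ _i ∈ t, c) / d #t := by rw [sum_const, nsmul_eq_mul]; ring
      _ ≤ (∑ i ∈ t, u i) / d #t :=
        div_le_div_of_nonneg_right (sum_le_sum fun i hi => (ht hi).le) (hd _)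
      _ ≤ B := hB t
  simpa using le_of_tendsto' (hd1.const_mul c) hcN

section Fourier

variable {T : ℝ} {ρ : Measure (AddCircle T)} {g : AddCircle T → ℂ}

lemma norm_fourier_apply (n : ℤ) (x : AddCircle T) : ‖fourier n x‖ = 1 :=
  Circle.norm_coe _

lemma MeasureTheory.Integrable.mul_fourier (hg : Integrable g ρ) (n : ℤ) :
    Integrable (fun x => g x * fourier n x) ρ :=
  hg.mul_bdd (map_continuous _).aestronglyMeasurable (c := 1)
    (.of_forall fun x => (norm_fourier_apply n x).le)

lemma integrable_mul_fourier_iff (n : ℤ) :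
    Integrable (fun x => g x * fourier n x) ρ ↔ Integrable g ρ := by
  refine ⟨fun h => ?_, fun hg => hg.mul_fourier n⟩
  convert h.mul_fourier (-n) using 2 with x
  rw [mul_assoc, ← fourier_add, add_neg_cancel, fourier_zero, mul_one]

lemma norm_integral_tsum_fourier_mul_le {a : ℤ → ℂ} (ha : Summable (‖a ·‖))
    (hg : Integrable g ρ) :
    ‖∫ x, (∑' k, a k * fourier k x) * g x ∂ρ‖ ≤ (∑' k, ‖a k‖) * ∫ x, ‖g x‖ ∂ρ := by
  rw [← integral_const_mul]
  refine norm_integral_le_of_norm_le (hg.norm.const_mul _) (.of_forall fun x => ?_)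
  have h : (fun k => ‖a k * fourier k x‖) = fun k => ‖a k‖ := by
    simp only [norm_mul, norm_fourier_apply, mul_one]
  rw [norm_mul]
  gcongr
  exact (norm_tsum_le_tsum_norm (h ▸ ha)).trans_eq (congrArg tsum h)

lemma integral_tsum_fourier_mul_of_support_subset {a : ℤ → ℂ} {s : Finset ℤ}
    (ha : ∀ k ∉ s, a k = 0) (hg : Integrable g ρ) :
    ∫ x, (∑' k, a k * fourier k x) * g x ∂ρ = ∑ k ∈ s, a k * ∫ x, g x * fourier k x ∂ρ := by
  have hfin : ∀ x : AddCircle T, ∑' k, a k * fourier k x = ∑ k ∈ s, a k * fourier k x := fun x =>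
    tsum_eq_sum fun k hk => by simp [ha k hk]
  simp_rw [hfin, sum_mul]
  rw [integral_finsetSum _ fun k _ => by
    simpa [mul_comm, mul_left_comm] using (hg.mul_fourier k).const_mul (a k)]
  refine sum_congr rfl fun k _ => ?_
  rw [← integral_const_mul]
  congr 1 with x
  ring

lemma exists_wienerNorm_le_one_norm_integral_eq {p : ℝ} (hp : p ≠ 0) {ε : ℝ} (hε : 0 ≤ ε)
    (hg : Integrable g ρ) (t : Finset ℤ) :
    ∃ a : ℤ → ℂ, Summable (‖a ·‖) ∧ wienerNorm p ε a ≤ 1 ∧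
      ‖∫ x, (∑' k, a k * fourier k x) * g x ∂ρ‖ =
        (∑ k ∈ t, ‖∫ x, g x * fourier k x ∂ρ‖) / (#t + 1 / ε * (#t : ℝ) ^ (1 / p)) := by
  choose c hc1 hc using fun k => Complex.exists_norm_eq_mul_self (∫ x, g x * fourier k x ∂ρ)
  set D : ℝ := #t + 1 / ε * (#t : ℝ) ^ (1 / p)
  have hD : 0 ≤ D := by positivity
  set a : ℤ → ℂ := fun k => if k ∈ t then (D⁻¹ : ℝ) * c k else 0
  have ha : ∀ k ∉ t, a k = 0 := fun k hk => if_neg hk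
  have ha_norm : ∀ k, ‖a k‖ = if k ∈ t then D⁻¹ else 0 := by
    intro k
    split_ifs with hk <;> simp [a, hk, hc1, hD]
  refine ⟨a, summable_of_ne_finset_zero (s := t) fun k hk => by simp [ha k hk], ?_, ?_⟩
  · rw [wienerNorm_of_norm_eq_ite hp ε (inv_nonneg.2 hD) ha_norm]
    exact inv_mul_le_one_of_le₀ le_rfl hD
  · have hsum : ∑ k ∈ t, a k * ∫ x, g x * fourier k x ∂ρ =
        ((D⁻¹ * ∑ k ∈ t, ‖∫ x, g x * fourier k x ∂ρ‖ : ℝ) : ℂ) := by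
      rw [Complex.ofReal_mul, Complex.ofReal_sum, mul_sum]
      refine sum_congr rfl fun k hk => ?_
      rw [show a k = ((D⁻¹ : ℝ) : ℂ) * c k from if_pos hk, mul_assoc, ← hc k]
    rw [integral_tsum_fourier_mul_of_support_subset ha hg, hsum, Complex.norm_real,
      Real.norm_of_nonneg (by positivity), div_eq_inv_mul]

end Fourier

theorem stmt17_general (p ε : ℝ) (hp : 1 < p) (hε : 0 < ε)
    (ρ : Measure (AddCircle (2 * Real.pi)))
    (g : AddCircle (2 * Real.pi) → ℂ) :
    Filter.limsup (fun n : ℤ => ‖∫ t, g t * fourier (-n) t ∂ρ‖)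
        Filter.cofinite
      ≤ sSup {x : ℝ | ∃ a : ℤ → ℂ, Summable (fun k => ‖a k‖) ∧
          (∑' k : ℤ, ‖a k‖) +
            (1 / ε) * (∑' k : ℤ, ‖a k‖ ^ p) ^ (1 / p) ≤ 1 ∧
          x = ‖∫ t, (∑' k : ℤ, a k * fourier k t) * g t ∂ρ‖} := by
  refine limsup_cofinite_le_of_sum_div_le (fun n => norm_nonneg _) (fun N => by positivity)
    (tendsto_natCast_div_add_mul_rpow hp (1 / ε)) fun t => ?_
  by_cases hg : Integrable g ρ
  · obtain ⟨a, ha, ha1, hval⟩ := exists_wienerNorm_le_one_norm_integral_eq (by positivity)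
      hε.le hg (t.map (Equiv.neg ℤ).toEmbedding)
    rw [sum_map, card_map] at hval
    refine le_csSup ⟨∫ x, ‖g x‖ ∂ρ, ?_⟩ ⟨a, ha, ha1, hval.symm⟩
    rintro _ ⟨b, hb, hb1, rfl⟩
    have hb1' : ∑' k, ‖b k‖ ≤ 1 := (le_add_of_nonneg_right (by positivity)).trans hb1
    calc _ ≤ (∑' k, ‖b k‖) * ∫ x, ‖g x‖ ∂ρ := norm_integral_tsum_fourier_mul_le hb hg
      _ ≤ ∫ x, ‖g x‖ ∂ρ := mul_le_of_le_one_left (integral_nonneg fun _ => norm_nonneg _) hb1'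
  · have h0 : ∀ n, ∫ x, g x * fourier n x ∂ρ = 0 := fun n =>
      integral_undef (mt (integrable_mul_fourier_iff n).1 hg)
    simp only [h0, norm_zero, sum_const_zero, zero_div]
    exact Real.sSup_nonneg (by rintro _ ⟨a, -, -, rfl⟩; exact norm_nonneg _)

/-- Lower bound for the dual norm of the restriction operator: for a measure
`μ = g dρ` supported on the compact `K`, the supremum of `|∫ f dμ|` over
Wiener-algebra functions `f` with `‖f‖_A + (1/ε)‖f‖_{A_p} ≤ 1` is at least
`limsup_{|n|→∞} |μ̂(n)|`. -/
theorem stmt17 (p ε : ℝ) (hp : 1 < p) (hε : 0 < ε)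
    (K : Set (AddCircle (2 * Real.pi))) (hK : IsCompact K)
    (ρ : Measure (AddCircle (2 * Real.pi))) [IsFiniteMeasure ρ]
    (g : AddCircle (2 * Real.pi) → ℂ) (hg : Measurable g)
    (hsupp : ρ Kᶜ = 0) :
    Filter.limsup (fun n : ℤ => ‖∫ t, g t * fourier (-n) t ∂ρ‖)
        Filter.cofinite
      ≤ sSup {x : ℝ | ∃ a : ℤ → ℂ, Summable (fun k => ‖a k‖) ∧
          (∑' k : ℤ, ‖a k‖) +
            (1 / ε) * (∑' k : ℤ, ‖a k‖ ^ p) ^ (1 / p) ≤ 1 ∧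
          x = ‖∫ t, (∑' k : ℤ, a k * fourier k t) * g t ∂ρ‖} :=
  stmt17_general p ε hp hε ρ g
end
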